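/- Let (P₀, ι, a, p) be a PASP such that P₀ is OLON-free, let q be a ground atom, and let R ⊆ P₀ be a relevance-closed subprogram of P₀ with atom set B_R such that q ∈ B_R. Let ι_R = {i ∈ ι : aᵢ ∈ B_R}. Then the lower probability of q in the PASP (P₀, ι, a, p) equals the lower probability of q in the PASP (R, ι_R, a restricted to ι_R, p restricted to ι_R). -/

import Mathlib

open scoped Classical

/-- A ground normal rule: a head atom, a finite positive body and a finite negative body. -/
structure GRule (α : Type) where
  head : α
  pos : Finset α
  neg : Finset α

namespace ASP

variable {α ι : Type}

/-- The Gelfond–Lifschitz reduct of a program `P` w.r.t. an interpretation `I`: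
the set of positive rules `(head r, pos r)` for rules whose negative body avoids `I`. -/
def glReduct (P : Set (GRule α)) (I : Set α) : Set (α × Finset α) :=
  {hb | ∃ r ∈ P, (∀ c ∈ r.neg, c ∉ I) ∧ hb = (r.head, r.pos)}

/-- `J` is a model of a set of positive rules `Q`. -/
def IsModelPos (Q : Set (α × Finset α)) (J : Set α) : Prop :=
  ∀ hb ∈ Q, (∀ b ∈ hb.2, b ∈ J) → hb.1 ∈ J

/-- `A` is an answer set (stable model) of `P`. -/
def IsAnswerSet (P : Set (GRule α)) (A : Set α) : Prop :=
  IsModelPos (glReduct P A) A ∧ ∀ B, B ⊂ A → ¬ IsModelPos (glReduct P A) B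

/-- The set of answer sets of `P`. -/
def AS (P : Set (GRule α)) : Set (Set α) := {A | IsAnswerSet P A}

/-- Operator deriving new true atoms, given a three-valued interpretation `I = (I_T, I_F)`. -/
def opTrue (P : Set (GRule α)) (I : Set α × Set α) : Set α →o Set α where
  toFun T := {a | a ∉ I.1 ∧ ∃ r ∈ P, r.head = a ∧ (∀ b ∈ r.pos, b ∈ I.1 ∪ T) ∧
    ∀ c ∈ r.neg, c ∈ I.2}
  monotone' := by
    intro T T' hT a ha
    obtain ⟨h1, r, hr, hh, hp, hn⟩ := ha
    exact ⟨h1, r, hr, hh, fun b hb => (hp b hb).imp id fun h => hT h, hn⟩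

/-- Operator deriving new false atoms, given a three-valued interpretation `I = (I_T, I_F)`. -/
def opFalse (P : Set (GRule α)) (I : Set α × Set α) : Set α →o Set α where
  toFun F := {a | a ∉ I.2 ∧ ∀ r ∈ P, r.head = a →
    (∃ b ∈ r.pos, b ∈ I.2 ∪ F) ∨ ∃ c ∈ r.neg, c ∈ I.1}
  monotone' := by
    intro F F' hF a ha
    refine ⟨ha.1, fun r hr hh => ?_⟩
    rcases ha.2 r hr hh with ⟨b, hb, hbm⟩ | h
    · exact Or.inl ⟨b, hb, hbm.imp id fun h => hF h⟩
    · exact Or.inr h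

/-- The iterated fixpoint operator: `IFP(I) = I ⊔ (lfp (opTrue I), gfp (opFalse I))`. -/
def IFP (P : Set (GRule α)) (I : Set α × Set α) : Set α × Set α :=
  I ⊔ (OrderHom.lfp (opTrue P I), OrderHom.gfp (opFalse P I))

/-- The well-founded model of `P`: the least fixpoint of `IFP`
(as the infimum of all prefixpoints of the monotone operator `IFP`). -/
def WFM (P : Set (GRule α)) : Set α × Set α :=
  sInf {I | IFP P I ≤ I}

/-- The WF reduct of `P`: delete rules whose positive body meets the false atoms or whose
negative body meets the true atoms of the WFM, and remove from the remaining rules the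
true atoms from positive bodies and the false atoms from negative bodies. -/
noncomputable def WFreduct (P : Set (GRule α)) : Set (GRule α) :=
  {r' | ∃ r ∈ P, (∀ b ∈ r.pos, b ∉ (WFM P).2) ∧ (∀ c ∈ r.neg, c ∉ (WFM P).1) ∧
    r' = ⟨r.head, r.pos.filter (fun b => b ∉ (WFM P).1),
          r.neg.filter (fun c => c ∉ (WFM P).2)⟩}

/-- The set of atoms occurring in a set of rules (as heads or in bodies). -/
def atomsOf (R : Set (GRule α)) : Set α :=
  {a | ∃ r ∈ R, a = r.head ∨ a ∈ r.pos ∨ a ∈ r.neg}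

/-- `R` is a relevance-closed subprogram of `P`. -/
def RelevanceClosed (P R : Set (GRule α)) : Prop :=
  R ⊆ P ∧ ∀ r ∈ P, r.head ∈ atomsOf R → r ∈ R

/-- Signed edge of the dependency graph of `P`; `s = true` marks a negative edge. -/
def Edge (P : Set (GRule α)) (x y : α) (s : Bool) : Prop :=
  ∃ r ∈ P, r.head = x ∧ ((s = false ∧ y ∈ r.pos) ∨ (s = true ∧ y ∈ r.neg))

/-- `Reaches P x y b`: there is a nonempty walk in the signed dependency graph from `x`
to `y` whose number of negative edges has parity `b` (`true` = odd). -/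
inductive Reaches (P : Set (GRule α)) : α → α → Bool → Prop
  | single {x y s} : Edge P x y s → Reaches P x y s
  | step {x y z s t} : Edge P x y s → Reaches P y z t → Reaches P x z (xor s t)

/-- `P` has no odd loops over negation. -/
def OLONFree (P : Set (GRule α)) : Prop := ∀ a : α, ¬ Reaches P a a true

/-- The program of a world `w`: `P₀` plus the facts `aᵢ` for `i ∈ w`. -/
def worldProg (P0 : Set (GRule α)) (atom : ι → α) (w : Finset ι) : Set (GRule α) :=
  P0 ∪ {r | ∃ i ∈ w, r = ⟨atom i, ∅, ∅⟩}

/-- The probability of a world `w` of a PASP with index set `S`. -/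
noncomputable def worldP (prob : ι → ℝ) (S w : Finset ι) : ℝ :=
  (∏ i ∈ w, prob i) * ∏ i ∈ S \ w, (1 - prob i)

/-- The upper probability of a query `q` in the PASP `(P₀, S, atom, prob)`. -/
noncomputable def UP (P0 : Set (GRule α)) (atom : ι → α) (prob : ι → ℝ)
    (S : Finset ι) (q : α) : ℝ :=
  ∑ w ∈ S.powerset.filter (fun w => ∃ A ∈ AS (worldProg P0 atom w), q ∈ A),
    worldP prob S w

/-- The lower probability of a query `q` in the PASP `(P₀, S, atom, prob)`. -/
noncomputable def LP (P0 : Set (GRule α)) (atom : ι → α) (prob : ι → ℝ)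
    (S : Finset ι) (q : α) : ℝ :=
  ∑ w ∈ S.powerset.filter (fun w => ∀ A ∈ AS (worldProg P0 atom w), q ∈ A),
    worldP prob S w

/-- `(P₀, S, atom, prob)` is a PASP: `P₀` is finite, the probabilistic atoms are pairwise
distinct, none of them is the head of a rule of `P₀`, and probabilities lie in `[0,1]`. -/
def IsPASP (P0 : Set (GRule α)) (atom : ι → α) (prob : ι → ℝ) (S : Finset ι) : Prop :=
  P0.Finite ∧ Set.InjOn atom ↑S ∧ (∀ i ∈ S, ∀ r ∈ P0, r.head ≠ atom i) ∧
    ∀ i ∈ S, prob i ∈ Set.Icc (0 : ℝ) 1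

end ASP

/-!
A finite OLON-free program always has an answer set. Take an atom `c` in a bottom strongly
connected component of the dependency graph. Since there is no odd loop, the atoms reachable
from `c` split into those reached by an even and by an odd number of negations; positive edges
stay inside a class and negative edges cross, so the bottom program on these atoms is bipartite,
and the lfp of the monotone operator "least model of one class, reduced by the least model of the
other" gives it an answer set. The Lifschitz–Turner splitting theorem then reduces the rest to a
program with fewer atoms.

In every world, the atoms of a relevance-closed `R` form a splitting set whose bottom program is
the world of `R` restricted to its own probabilistic facts. As the top part always has an answer
set, `q` lies in every answer set of the world iff it lies in every answer set of the restricted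
world, and summing the world probabilities over the facts outside `R` gives `1`.
-/

namespace ASP

variable {α ι : Type}

section DependencyGraph

variable {P Q : Set (GRule α)}

theorem Reaches.mono (h : Edge P ≤ Edge Q) {a b : α} {s : Bool} (hr : Reaches P a b s) :
    Reaches Q a b s := by
  induction hr with
  | single e => exact .single (h _ _ _ e)
  | step e _ ih => exact .step (h _ _ _ e) ih

theorem OLONFree.anti (h : Edge P ≤ Edge Q) (hQ : OLONFree Q) : OLONFree P :=
  fun a ha => hQ a (ha.mono h)

theorem Reaches.trans {a b c : α} {s t : Bool} (h₁ : Reaches P a b s) (h₂ : Reaches P b c t) :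
    Reaches P a c (xor s t) := by
  induction h₁ with
  | single e => exact .step e h₂
  | step e _ ih => rw [Bool.xor_assoc]; exact .step e (ih h₂)

theorem head_mem_atomsOf {r : GRule α} (hr : r ∈ P) : r.head ∈ atomsOf P :=
  ⟨r, hr, .inl rfl⟩

theorem Reaches.mem_atomsOf {a b : α} {s : Bool} (h : Reaches P a b s) : b ∈ atomsOf P := by
  induction h with
  | single e =>
    obtain ⟨r, hr, -, ⟨-, hb⟩ | ⟨-, hb⟩⟩ := e
    exacts [⟨r, hr, .inr (.inl hb)⟩, ⟨r, hr, .inr (.inr hb)⟩]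
  | step _ _ ih => exact ih

theorem atomsOf_finite (h : P.Finite) : (atomsOf P).Finite := by
  refine (h.biUnion fun r _ => ((Set.finite_singleton r.head).union r.pos.finite_toSet).union
    r.neg.finite_toSet).subset ?_
  rintro a ⟨r, hr, ha⟩
  refine Set.mem_biUnion hr ?_
  rcases ha with ha | ha | ha <;> simp [ha]

theorem exists_bottom_atom (hfin : P.Finite) (hne : (atomsOf P).Nonempty) :
    ∃ c ∈ atomsOf P, ∀ b s, Reaches P c b s → ∃ t, Reaches P b c t := by
  let reach (x : α) : Set α := {y | y = x ∨ ∃ s, Reaches P x y s}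
  obtain ⟨c, hcP, hmin⟩ := (atomsOf_finite hfin).exists_minimalFor reach _ hne
  refine ⟨c, hcP, fun b s hcb => ?_⟩
  have hbc : reach b ⊆ reach c := by
    rintro y (rfl | ⟨t, hby⟩)
    exacts [.inr ⟨s, hcb⟩, .inr ⟨_, hcb.trans hby⟩]
  rcases hmin hcb.mem_atomsOf hbc (.inl rfl) with rfl | hback
  exacts [⟨s, hcb⟩, hback]

def parityClass (P : Set (GRule α)) (c : α) (b : Bool) : Set α :=
  {x | (x = c ∧ b = false) ∨ Reaches P c x b}

theorem mem_parityClass_of_edge {c x y : α} {b s : Bool} (hx : x ∈ parityClass P c b)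
    (e : Edge P x y s) : y ∈ parityClass P c (xor b s) := by
  rcases hx with ⟨rfl, rfl⟩ | hx
  · exact .inr (by simpa using Reaches.single e)
  · exact .inr (hx.trans (.single e))

theorem parityClass_body {c : α} {b : Bool} {r : GRule α} (hr : r ∈ P)
    (hh : r.head ∈ parityClass P c b) :
    (∀ x ∈ r.pos, x ∈ parityClass P c b) ∧ ∀ x ∈ r.neg, x ∈ parityClass P c (!b) :=
  ⟨fun x hx => by simpa using mem_parityClass_of_edge hh ⟨r, hr, rfl, .inl ⟨rfl, hx⟩⟩,
    fun x hx => by simpa using mem_parityClass_of_edge hh ⟨r, hr, rfl, .inr ⟨rfl, hx⟩⟩⟩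

theorem disjoint_parityClass (holon : OLONFree P) {c : α}
    (hc : ∀ x s, Reaches P c x s → ∃ t, Reaches P x c t) :
    Disjoint (parityClass P c false) (parityClass P c true) := by
  rw [Set.disjoint_left]
  rintro x hxF (⟨-, h⟩ | hxT)
  · exact Bool.false_ne_true h.symm
  obtain ⟨t, hxc⟩ := hc x true hxT
  have heven : Reaches P c c t := by
    rcases hxF with ⟨rfl, -⟩ | hxF
    · exact hxc
    · simpa using hxF.trans hxc
  cases t
  · exact holon c (by simpa using hxT.trans hxc)
  · exact holon c heven

end DependencyGraph

section AnswerSets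

variable {P : Set (GRule α)}

theorem isModelPos_glReduct_iff {I J : Set α} :
    IsModelPos (glReduct P I) J ↔
      ∀ r ∈ P, (∀ c ∈ r.neg, c ∉ I) → (∀ b ∈ r.pos, b ∈ J) → r.head ∈ J := by
  constructor
  · exact fun h r hr hneg hpos => h _ ⟨r, hr, hneg, rfl⟩ hpos
  · rintro h _ ⟨r, hr, hneg, rfl⟩ hpos
    exact h r hr hneg hpos

theorem IsAnswerSet.subset_of_forall_head_mem {A H : Set α} (hA : IsAnswerSet P A)
    (hH : ∀ r ∈ P, r.head ∈ H) : A ⊆ H := by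
  by_contra hAH
  refine hA.2 (A ∩ H) (Set.inter_ssubset_left_iff.2 hAH) ?_
  refine isModelPos_glReduct_iff.2 fun r hr hneg hpos => ⟨?_, hH r hr⟩
  exact isModelPos_glReduct_iff.1 hA.1 r hr hneg fun b hb => (hpos b hb).1

def leastModel (P : Set (GRule α)) (I : Set α) : Set α :=
  ⋂₀ {J | IsModelPos (glReduct P I) J}

theorem isModelPos_leastModel {I : Set α} : IsModelPos (glReduct P I) (leastModel P I) :=
  fun hb hbP hbody J hJ => hJ hb hbP fun b hb => hbody b hb J hJ

theorem leastModel_subset {I J : Set α} (h : IsModelPos (glReduct P I) J) :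
    leastModel P I ⊆ J :=
  Set.sInter_subset_of_mem h

theorem leastModel_anti {I I' : Set α} (h : I ⊆ I') : leastModel P I' ⊆ leastModel P I :=
  leastModel_subset <| isModelPos_glReduct_iff.2 fun r hr hneg hpos =>
    isModelPos_glReduct_iff.1 isModelPos_leastModel r hr (fun c hc hcI => hneg c hc (h hcI)) hpos

theorem leastModel_subset_of_forall_head_mem {I H : Set α} (hH : ∀ r ∈ P, r.head ∈ H) :
    leastModel P I ⊆ H :=
  leastModel_subset <| isModelPos_glReduct_iff.2 fun r hr _ _ => hH r hr

def bottom (P : Set (GRule α)) (U : Set α) : Set (GRule α) := {r ∈ P | r.head ∈ U}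

theorem isAnswerSet_of_alternating {C : Bool → Set α} (hdisj : Disjoint (C false) (C true))
    (hcol : ∀ r ∈ P, ∃ b, r.head ∈ C b)
    (hbody : ∀ r ∈ P, ∀ b, r.head ∈ C b → (∀ x ∈ r.pos, x ∈ C b) ∧ ∀ x ∈ r.neg, x ∈ C (!b))
    {X : Bool → Set α}
    (hX : ∀ b, X b = leastModel (bottom P (C b)) (X !b)) : IsAnswerSet P (X false ∪ X true) := by
  set A := X false ∪ X true
  have hXC (b : Bool) : X b ⊆ C b := by
    rw [hX b]; exact leastModel_subset_of_forall_head_mem fun r hr => hr.2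
  have hAC (b : Bool) {x : α} (hxC : x ∈ C b) (hxA : x ∈ A) : x ∈ X b := by
    have hd : Disjoint (C b) (C !b) := by cases b; exacts [hdisj, hdisj.symm]
    have hxA' : x ∈ X b ∨ x ∈ X !b := by cases b; exacts [hxA, hxA.symm]
    exact hxA'.resolve_right fun hx => hd.notMem_of_mem_left hxC (hXC _ hx)
  have hXA (b : Bool) : X b ⊆ A := by
    cases b; exacts [Set.subset_union_left, Set.subset_union_right]
  constructor
  · refine isModelPos_glReduct_iff.2 fun r hr hneg hpos => ?_
    obtain ⟨b, hb⟩ := hcol r hr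
    obtain ⟨hposC, -⟩ := hbody r hr b hb
    have hlm : r.head ∈ leastModel (bottom P (C b)) (X !b) :=
      isModelPos_glReduct_iff.1 isModelPos_leastModel r ⟨hr, hb⟩
        (fun c hc hcX => hneg c hc (hXA _ hcX))
        fun x hx => hX b ▸ hAC b (hposC x hx) (hpos x hx)
    exact hXA b (hX b ▸ hlm)
  · intro M hMA hM
    refine hMA.2 (Set.union_subset_iff.2 ⟨?_, ?_⟩) <;>
    · rw [hX]
      refine leastModel_subset <| isModelPos_glReduct_iff.2 fun r ⟨hr, hb⟩ hneg hpos => ?_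
      refine isModelPos_glReduct_iff.1 hM r hr (fun c hc hcA => ?_) hpos
      exact hneg c hc (hAC _ ((hbody r hr _ hb).2 c hc) hcA)

theorem exists_isAnswerSet_of_bipartite {C : Bool → Set α}
    (hdisj : Disjoint (C false) (C true)) (hcol : ∀ r ∈ P, ∃ b, r.head ∈ C b)
    (hbody : ∀ r ∈ P, ∀ b, r.head ∈ C b → (∀ x ∈ r.pos, x ∈ C b) ∧ ∀ x ∈ r.neg, x ∈ C (!b)) :
    ∃ A, IsAnswerSet P A := by
  let φ : Set α →o Set α :=
    ⟨fun T => leastModel (bottom P (C true)) (leastModel (bottom P (C false)) T),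
      fun _ _ h => leastModel_anti (leastModel_anti h)⟩
  refine ⟨_, isAnswerSet_of_alternating hdisj hcol hbody
    (X := fun b => bif b then φ.lfp else leastModel (bottom P (C false)) φ.lfp) ?_⟩
  rintro (_ | _)
  · rfl
  · exact φ.map_lfp.symm

end AnswerSets

section Splitting

variable {P : Set (GRule α)} {U : Set α}

def IsSplittingSet (P : Set (GRule α)) (U : Set α) : Prop :=
  ∀ r ∈ P, r.head ∈ U → (∀ b ∈ r.pos, b ∈ U) ∧ ∀ c ∈ r.neg, c ∈ U

-- Lifschitz–Turner's `e_U(P \ b_U(P), X)`.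
def evalTop (P : Set (GRule α)) (U X : Set α) : Set (GRule α) :=
  {r' | ∃ r ∈ P, r.head ∉ U ∧ (∀ b ∈ r.pos, b ∈ U → b ∈ X) ∧ (∀ c ∈ r.neg, c ∈ U → c ∉ X) ∧
    r' = ⟨r.head, r.pos.filter (· ∉ U), r.neg.filter (· ∉ U)⟩}

theorem evalTop_finite (h : P.Finite) {X : Set α} : (evalTop P U X).Finite :=
  (h.image fun r => ⟨r.head, r.pos.filter (· ∉ U), r.neg.filter (· ∉ U)⟩).subset
    fun _ ⟨r, hr, _, _, _, hr'⟩ => ⟨r, hr, hr'.symm⟩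

theorem head_notMem_of_mem_evalTop {X : Set α} {r : GRule α} (hr : r ∈ evalTop P U X) :
    r.head ∉ U := by
  obtain ⟨r, -, hU, -, -, rfl⟩ := hr
  exact hU

theorem edge_evalTop_le {X : Set α} : Edge (evalTop P U X) ≤ Edge P := by
  rintro x y s ⟨_, ⟨r, hr, -, -, -, rfl⟩, hh, ⟨hs, hb⟩ | ⟨hs, hb⟩⟩
  · exact ⟨r, hr, hh, .inl ⟨hs, (Finset.mem_filter.1 hb).1⟩⟩
  · exact ⟨r, hr, hh, .inr ⟨hs, (Finset.mem_filter.1 hb).1⟩⟩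

theorem atomsOf_evalTop_subset {X : Set α} : atomsOf (evalTop P U X) ⊆ atomsOf P \ U := by
  rintro x ⟨_, ⟨r, hr, hU, -, -, rfl⟩, rfl | hx | hx⟩
  · exact ⟨⟨r, hr, .inl rfl⟩, hU⟩
  · obtain ⟨hx, hxU⟩ := Finset.mem_filter.1 hx
    exact ⟨⟨r, hr, .inr (.inl hx)⟩, hxU⟩
  · obtain ⟨hx, hxU⟩ := Finset.mem_filter.1 hx
    exact ⟨⟨r, hr, .inr (.inr hx)⟩, hxU⟩

theorem isModelPos_glReduct_evalTop_iff {X I J : Set α} :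
    IsModelPos (glReduct (evalTop P U X) I) J ↔
      ∀ r ∈ P, r.head ∉ U → (∀ b ∈ r.pos, b ∈ U → b ∈ X) → (∀ c ∈ r.neg, c ∈ U → c ∉ X) →
        (∀ c ∈ r.neg, c ∉ U → c ∉ I) → (∀ b ∈ r.pos, b ∉ U → b ∈ J) → r.head ∈ J := by
  rw [isModelPos_glReduct_iff]
  constructor
  · intro h r hr hU hposX hnegX hneg hpos
    refine h ⟨r.head, r.pos.filter (· ∉ U), r.neg.filter (· ∉ U)⟩
      ⟨r, hr, hU, hposX, hnegX, rfl⟩ (fun c hc => ?_) fun b hb => ?_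
    · obtain ⟨hc, hcU⟩ := Finset.mem_filter.1 hc
      exact hneg c hc hcU
    · obtain ⟨hb, hbU⟩ := Finset.mem_filter.1 hb
      exact hpos b hb hbU
  · rintro h _ ⟨r, hr, hU, hposX, hnegX, rfl⟩ hneg hpos
    exact h r hr hU hposX hnegX (fun c hc hcU => hneg c (Finset.mem_filter.2 ⟨hc, hcU⟩))
      fun b hb hbU => hpos b (Finset.mem_filter.2 ⟨hb, hbU⟩)

theorem IsAnswerSet.inter_bottom (hU : IsSplittingSet P U) {A : Set α} (hA : IsAnswerSet P A) :
    IsAnswerSet (bottom P U) (A ∩ U) := by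
  have hAmod := isModelPos_glReduct_iff.1 hA.1
  constructor
  · refine isModelPos_glReduct_iff.2 fun r ⟨hr, hhU⟩ hneg hpos => ⟨?_, hhU⟩
    exact hAmod r hr (fun c hc hcA => hneg c hc ⟨hcA, (hU r hr hhU).2 c hc⟩)
      fun b hb => (hpos b hb).1
  · intro M hMA hM
    obtain ⟨x, ⟨hxA, hxU⟩, hxM⟩ := Set.exists_of_ssubset hMA
    have hMA' : M ∪ A \ U ⊂ A :=
      ⟨Set.union_subset (fun y hy => (hMA.1 hy).1) Set.sdiff_subset, fun h =>
        (h hxA).elim hxM fun hx => hx.2 hxU⟩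
    refine hA.2 _ hMA' (isModelPos_glReduct_iff.2 fun r hr hneg hpos => ?_)
    by_cases hhU : r.head ∈ U
    · refine .inl (isModelPos_glReduct_iff.1 hM r ⟨hr, hhU⟩ (fun c hc hcA => hneg c hc hcA.1)
        fun b hb => (hpos b hb).resolve_right fun h => h.2 ((hU r hr hhU).1 b hb))
    · exact .inr ⟨hAmod r hr hneg fun b hb => hMA'.1 (hpos b hb), hhU⟩

theorem IsAnswerSet.union_evalTop (hU : IsSplittingSet P U) {X Y : Set α}
    (hX : IsAnswerSet (bottom P U) X) (hY : IsAnswerSet (evalTop P U X) Y) :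
    IsAnswerSet P (X ∪ Y) := by
  have hXU : X ⊆ U := hX.subset_of_forall_head_mem fun r hr => hr.2
  have hYU : Y ⊆ Uᶜ := hY.subset_of_forall_head_mem fun r hr => head_notMem_of_mem_evalTop hr
  have hXmod := isModelPos_glReduct_iff.1 hX.1
  have hYmod := isModelPos_glReduct_evalTop_iff.1 hY.1
  constructor
  · refine isModelPos_glReduct_iff.2 fun r hr hneg hpos => ?_
    by_cases hhU : r.head ∈ U
    · refine .inl (hXmod r ⟨hr, hhU⟩ (fun c hc hcX => hneg c hc (.inl hcX)) fun b hb => ?_)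
      exact (hpos b hb).resolve_right fun hbY => hYU hbY ((hU r hr hhU).1 b hb)
    · refine .inr (hYmod r hr hhU (fun b hb hbU => ?_) (fun c hc _ hcX => hneg c hc (.inl hcX))
        (fun c hc _ hcY => hneg c hc (.inr hcY)) fun b hb hbU => ?_)
      · exact (hpos b hb).resolve_right fun hbY => hYU hbY hbU
      · exact (hpos b hb).resolve_left fun hbX => hbU (hXU hbX)
  · intro M hMXY hM
    have hMmod := isModelPos_glReduct_iff.1 hM
    have hXM : X ⊆ M := by
      by_contra hXM
      refine hX.2 (M ∩ U) ⟨fun x ⟨hxM, hxU⟩ => (hMXY.1 hxM).resolve_right fun hxY => hYU hxY hxU,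
        fun h => hXM fun x hx => (h hx).1⟩ <|
        isModelPos_glReduct_iff.2 fun r ⟨hr, hhU⟩ hneg hpos => ?_
      refine ⟨hMmod r hr (fun c hc hcXY => ?_) fun b hb => (hpos b hb).1, hhU⟩
      exact hcXY.elim (hneg c hc) fun hcY => hYU hcY ((hU r hr hhU).2 c hc)
    have hMY : ¬ Y ⊆ M := fun hYM => hMXY.2 (Set.union_subset hXM hYM)
    refine hY.2 (M \ U) ⟨fun x ⟨hxM, hxU⟩ => (hMXY.1 hxM).resolve_left fun hxX => hxU (hXU hxX),
      fun h => hMY fun y hy => (h hy).1⟩ ?_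
    refine isModelPos_glReduct_evalTop_iff.2 fun r hr hhU hposX hnegX hneg hpos => ⟨?_, hhU⟩
    refine hMmod r hr (fun c hc hcXY => ?_) fun b hb => ?_
    · by_cases hcU : c ∈ U
      · exact hcXY.elim (hnegX c hc hcU) fun hcY => hYU hcY hcU
      · exact hcXY.elim (fun hcX => hcU (hXU hcX)) (hneg c hc hcU)
    · by_cases hbU : b ∈ U
      · exact hXM (hposX b hb hbU)
      · exact (hpos b hb hbU).1

end Splitting

theorem isSplittingSet_parityClass {P : Set (GRule α)} (c : α) :
    IsSplittingSet P (parityClass P c false ∪ parityClass P c true) := by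
  have hsub (b : Bool) : parityClass P c b ⊆ parityClass P c false ∪ parityClass P c true := by
    cases b; exacts [Set.subset_union_left, Set.subset_union_right]
  intro r hr hh
  obtain ⟨b, hb⟩ : ∃ b, r.head ∈ parityClass P c b := hh.elim (⟨false, ·⟩) (⟨true, ·⟩)
  exact ⟨fun x hx => hsub _ ((parityClass_body hr hb).1 x hx),
    fun x hx => hsub _ ((parityClass_body hr hb).2 x hx)⟩

theorem exists_isAnswerSet_of_olonFree {P : Set (GRule α)} (hfin : P.Finite)
    (holon : OLONFree P) : ∃ A, IsAnswerSet P A := by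
  induction hn : (atomsOf P).ncard using Nat.strong_induction_on generalizing P with
  | _ n ih =>
  rcases (atomsOf P).eq_empty_or_nonempty with hP | hP
  · have hnil (r) (hr : r ∈ P) : False := (hP ▸ head_mem_atomsOf hr : r.head ∈ (∅ : Set α))
    exact exists_isAnswerSet_of_bipartite (C := fun _ => ∅) (Set.disjoint_empty _)
      (fun r hr => (hnil r hr).elim) fun r hr => (hnil r hr).elim
  obtain ⟨c, hcP, hc⟩ := exists_bottom_atom hfin hP
  set C := parityClass P c
  set U := C false ∪ C true
  obtain ⟨X, hX⟩ := exists_isAnswerSet_of_bipartite (P := bottom P U)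
    (disjoint_parityClass holon hc) (fun r hr => hr.2.elim (⟨false, ·⟩) (⟨true, ·⟩))
    fun r hr _ hb => parityClass_body hr.1 hb
  have hlt : (atomsOf (evalTop P U X)).ncard < n := by
    refine hn ▸ Set.ncard_lt_ncard ⟨atomsOf_evalTop_subset.trans Set.sdiff_subset, fun h => ?_⟩
      (atomsOf_finite hfin)
    exact (atomsOf_evalTop_subset (h hcP)).2 (.inl (.inl ⟨rfl, rfl⟩))
  obtain ⟨Y, hY⟩ := ih _ hlt (evalTop_finite hfin) (holon.anti edge_evalTop_le) rfl
  exact ⟨X ∪ Y, hX.union_evalTop (isSplittingSet_parityClass c) hY⟩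

theorem forall_mem_answerSet_iff_bottom {P : Set (GRule α)} {U : Set α} (hfin : P.Finite)
    (holon : OLONFree P) (hU : IsSplittingSet P U) {q : α} (hq : q ∈ U) :
    (∀ A ∈ AS P, q ∈ A) ↔ ∀ X ∈ AS (bottom P U), q ∈ X := by
  refine ⟨fun h X hX => ?_, fun h A hA => (h _ (hA.inter_bottom hU)).1⟩
  obtain ⟨Y, hY⟩ :=
    exists_isAnswerSet_of_olonFree (evalTop_finite hfin (X := X)) (holon.anti edge_evalTop_le)
  have hYU : Y ⊆ Uᶜ := hY.subset_of_forall_head_mem fun r hr => head_notMem_of_mem_evalTop hr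
  exact (h _ (hX.union_evalTop hU hY)).resolve_right fun hqY => hYU hqY hq

section Worlds

variable {P0 : Set (GRule α)} {atom : ι → α} {w : Finset ι}

theorem worldProg_finite (hfin : P0.Finite) : (worldProg P0 atom w).Finite :=
  hfin.union <| (w.finite_toSet.image fun i => (⟨atom i, ∅, ∅⟩ : GRule α)).subset
    fun _ ⟨i, hi, hr⟩ => ⟨i, hi, hr.symm⟩

theorem edge_worldProg_le : Edge (worldProg P0 atom w) ≤ Edge P0 := by
  rintro x y s ⟨r, hr | ⟨i, -, rfl⟩, hh, hb⟩
  · exact ⟨r, hr, hh, hb⟩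
  · rcases hb with ⟨-, hb⟩ | ⟨-, hb⟩ <;> exact absurd hb (Finset.notMem_empty y)

theorem RelevanceClosed.isSplittingSet_worldProg {R : Set (GRule α)}
    (hrel : RelevanceClosed P0 R) : IsSplittingSet (worldProg P0 atom w) (atomsOf R) := by
  rintro r (hr | ⟨i, -, rfl⟩) hh
  · have hrR := hrel.2 r hr hh
    exact ⟨fun b hb => ⟨r, hrR, .inr (.inl hb)⟩, fun c hc => ⟨r, hrR, .inr (.inr hc)⟩⟩
  · simp

theorem RelevanceClosed.bottom_worldProg {R : Set (GRule α)} (hrel : RelevanceClosed P0 R) :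
    bottom (worldProg P0 atom w) (atomsOf R) =
      worldProg R atom (w.filter fun i => atom i ∈ atomsOf R) := by
  ext r
  constructor
  · rintro ⟨hr | ⟨i, hi, rfl⟩, hh⟩
    · exact .inl (hrel.2 r hr hh)
    · exact .inr ⟨i, Finset.mem_filter.2 ⟨hi, hh⟩, rfl⟩
  · rintro (hr | ⟨i, hi, rfl⟩)
    · exact ⟨.inl (hrel.1 hr), head_mem_atomsOf hr⟩
    · obtain ⟨hi, hh⟩ := Finset.mem_filter.1 hi
      exact ⟨.inr ⟨i, hi, rfl⟩, hh⟩

end Worlds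

section Marginalization

variable (prob : ι → ℝ) {S w : Finset ι} {i : ι}

theorem worldP_insert (hiS : i ∉ S) (hw : w ⊆ S) :
    worldP prob (insert i S) w = (1 - prob i) * worldP prob S w := by
  have hiw : i ∉ S \ w := fun h => hiS (Finset.mem_sdiff.1 h).1
  rw [worldP, worldP, Finset.insert_sdiff_of_notMem _ fun h => hiS (hw h),
    Finset.prod_insert hiw]
  ring

theorem worldP_insert_insert (hiS : i ∉ S) (hw : w ⊆ S) :
    worldP prob (insert i S) (insert i w) = prob i * worldP prob S w := by
  rw [worldP, worldP, Finset.prod_insert fun h => hiS (hw h), Finset.insert_sdiff_insert,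
    Finset.sdiff_insert_of_notMem hiS]
  ring

theorem sum_powerset_insert_mul_worldP (hiS : i ∉ S) {f : Finset ι → ℝ}
    (hf : ∀ w ⊆ S, f (insert i w) = f w) :
    ∑ w ∈ (insert i S).powerset, f w * worldP prob (insert i S) w =
      ∑ w ∈ S.powerset, f w * worldP prob S w := by
  rw [Finset.sum_powerset_insert hiS, ← Finset.sum_add_distrib]
  refine Finset.sum_congr rfl fun w hw => ?_
  rw [Finset.mem_powerset] at hw
  rw [worldP_insert prob hiS hw, worldP_insert_insert prob hiS hw, hf w hw]
  ring

theorem sum_powerset_mul_worldP_inter {T : Finset ι} (hT : T ⊆ S) (f : Finset ι → ℝ) :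
    ∑ w ∈ S.powerset, f (w ∩ T) * worldP prob S w = ∑ w ∈ T.powerset, f w * worldP prob T w := by
  obtain ⟨D, hTD, rfl⟩ : ∃ D, Disjoint T D ∧ S = T ∪ D :=
    ⟨S \ T, Finset.disjoint_sdiff, (Finset.union_sdiff_of_subset hT).symm⟩
  clear hT
  induction D using Finset.induction_on with
  | empty =>
    refine Finset.sum_congr (by rw [Finset.union_empty]) fun w hw => ?_
    rw [Finset.union_empty, Finset.inter_eq_left.2 (Finset.mem_powerset.1 hw)]
  | insert j D hjD ih =>
    obtain ⟨hjT, hTD⟩ := Finset.disjoint_insert_right.1 hTD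
    rw [Finset.union_insert, sum_powerset_insert_mul_worldP prob (by simp [hjT, hjD])
      fun w _ => by rw [Finset.insert_inter_of_notMem hjT]]
    exact ih hTD

theorem sum_filter_inter_worldP {T : Finset ι} (hT : T ⊆ S) (c : Finset ι → Prop) :
    ∑ w ∈ S.powerset.filter (fun w => c (w ∩ T)), worldP prob S w =
      ∑ w ∈ T.powerset.filter c, worldP prob T w := by
  simpa only [Finset.sum_filter, ite_mul, one_mul, zero_mul] using
    sum_powerset_mul_worldP_inter prob hT fun w => if c w then 1 else 0

end Marginalization

end ASP

open ASP in
/-- For an OLON-free PASP and a relevance-closed subprogram `R` of `P₀`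
containing the query atom `q`, the lower probability of `q` equals the lower probability
of `q` in the PASP on `R` restricted to the probabilistic indices whose atom occurs in `R`. -/
theorem LP_residual {α ι : Type} (P0 : Set (GRule α)) (atom : ι → α)
    (prob : ι → ℝ) (S : Finset ι) (q : α) (hpasp : IsPASP P0 atom prob S)
    (holon : OLONFree P0) (R : Set (GRule α)) (hrel : RelevanceClosed P0 R)
    (hq : q ∈ atomsOf R) :
    LP P0 atom prob S q
      = LP R atom prob (S.filter fun i => atom i ∈ atomsOf R) q := by
  have hworlds : S.powerset.filter (fun w => ∀ A ∈ AS (worldProg P0 atom w), q ∈ A) =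
      S.powerset.filter fun w =>
        ∀ A ∈ AS (worldProg R atom (w ∩ S.filter fun i => atom i ∈ atomsOf R)), q ∈ A := by
    refine Finset.filter_congr fun w hw => ?_
    rw [forall_mem_answerSet_iff_bottom (worldProg_finite hpasp.1) (holon.anti edge_worldProg_le)
      hrel.isSplittingSet_worldProg hq, hrel.bottom_worldProg, Finset.inter_filter,
      Finset.inter_eq_left.2 (Finset.mem_powerset.1 hw)]
  rw [LP, LP, hworlds]
  exact sum_filter_inter_worldP prob (Finset.filter_subset _ S)
    fun w => ∀ A ∈ AS (worldProg R atom w), q ∈ A
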